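/- (F2b) Let x > 0, y > 0 and set a = (x+y)/2 and g = √(xy). Then 1/√a ≤ √(2/(a+g)) ≤ 2/(√((a+g)/2)+√g) ≤ (2/π)·R_F(x,y,0) ≤ (2/(ag+g²))^{1/4} ≤ 1/√g, and each of these inequalities is an equality iff x = y. -/

import Mathlib

open MeasureTheory Real Set Filter Topology


noncomputable def RF (x y z : ℝ) : ℝ :=
  (1/2) * ∫ t in Set.Ioi (0:ℝ), ((t+x)*(t+y)*(t+z)) ^ (-(1/2) : ℝ)

lemma sqrtInt_deriv (c : ℝ) (hc : 0 < c) (t : ℝ) (ht : 0 < t) :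
    HasDerivAt (fun s : ℝ => 2 / Real.sqrt c * Real.arctan (Real.sqrt s / Real.sqrt c))
      ((Real.sqrt t * (t + c))⁻¹) t := by
  have hsc : 0 < Real.sqrt c := Real.sqrt_pos.2 hc
  have hst : 0 < Real.sqrt t := Real.sqrt_pos.2 ht
  have h1 : HasDerivAt (fun s : ℝ => Real.sqrt s / Real.sqrt c)
      (1 / (2 * Real.sqrt t) / Real.sqrt c) t :=
    (Real.hasDerivAt_sqrt ht.ne').div_const _
  have h2 : HasDerivAt Real.arctan (1 / (1 + (Real.sqrt t / Real.sqrt c)^2))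
      (Real.sqrt t / Real.sqrt c) := Real.hasDerivAt_arctan _
  have h3 : HasDerivAt (fun s : ℝ => 2 / Real.sqrt c * Real.arctan (Real.sqrt s / Real.sqrt c))
      (2 / Real.sqrt c * (1 / (1 + (Real.sqrt t / Real.sqrt c)^2) * (1 / (2 * Real.sqrt t) / Real.sqrt c))) t :=
    (h2.comp t h1).const_mul (2 / Real.sqrt c)
  convert h3 using 1
  have hsq : (Real.sqrt t / Real.sqrt c)^2 = t / c := by
    rw [div_pow, Real.sq_sqrt ht.le, Real.sq_sqrt hc.le]
  rw [hsq]
  field_simp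
  ring_nf
  rw [Real.sq_sqrt hc.le]
  ring

lemma sqrtInt_tendsto (c : ℝ) (hc : 0 < c) :
    Tendsto (fun s : ℝ => 2 / Real.sqrt c * Real.arctan (Real.sqrt s / Real.sqrt c)) atTop
      (𝓝 (π / Real.sqrt c)) := by
  have hsc : 0 < Real.sqrt c := Real.sqrt_pos.2 hc
  have hsqrt : Tendsto Real.sqrt atTop atTop := by
    apply tendsto_atTop_atTop.2
    intro b
    exact ⟨(max b 0)^2, fun a ha => le_trans (le_max_left b 0)
      (by rw [← Real.sqrt_sq (le_max_right b 0)]; exact Real.sqrt_le_sqrt ha)⟩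
  have h1 : Tendsto (fun s : ℝ => Real.sqrt s / Real.sqrt c) atTop atTop :=
    hsqrt.atTop_div_const hsc
  have h2 : Tendsto (fun s : ℝ => Real.arctan (Real.sqrt s / Real.sqrt c)) atTop (𝓝 (π/2)) :=
    (Real.tendsto_arctan_atTop.mono_right nhdsWithin_le_nhds).comp h1
  have h3 := h2.const_mul (2 / Real.sqrt c)
  have : 2 / Real.sqrt c * (π / 2) = π / Real.sqrt c := by field_simp
  rw [this] at h3
  exact h3

lemma sqrtInt_integrable (c : ℝ) (hc : 0 < c) :
    IntegrableOn (fun t : ℝ => (Real.sqrt t * (t + c))⁻¹) (Ioi 0) := by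
  apply integrableOn_Ioi_deriv_of_nonneg (g := fun s : ℝ =>
      2 / Real.sqrt c * Real.arctan (Real.sqrt s / Real.sqrt c))
      (l := π / Real.sqrt c)
  · exact (continuous_const.mul (Real.continuous_arctan.comp
      (Real.continuous_sqrt.div_const _))).continuousWithinAt
  · exact fun t ht => sqrtInt_deriv c hc t ht
  · intro t ht
    have : 0 < Real.sqrt t * (t + c) :=
      mul_pos (Real.sqrt_pos.2 ht) (by linarith [ht.out])
    positivity
  · exact sqrtInt_tendsto c hc

lemma sqrtInt_value (c : ℝ) (hc : 0 < c) :
    ∫ t in Ioi (0:ℝ), (Real.sqrt t * (t + c))⁻¹ = π / Real.sqrt c := by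
  have := integral_Ioi_of_hasDerivAt_of_tendsto
    (f := fun s : ℝ => 2 / Real.sqrt c * Real.arctan (Real.sqrt s / Real.sqrt c))
    (f' := fun t : ℝ => (Real.sqrt t * (t + c))⁻¹) (a := 0) (m := π / Real.sqrt c)
    ((continuous_const.mul (Real.continuous_arctan.comp
      (Real.continuous_sqrt.div_const _))).continuousWithinAt)
    (fun t ht => sqrtInt_deriv c hc t ht)
    (sqrtInt_integrable c hc) (sqrtInt_tendsto c hc)
  simpa using this

noncomputable def RF' (x y z : ℝ) : ℝ :=
  (1/2) * ∫ t in Set.Ioi (0:ℝ), ((t+x)*(t+y)*(t+z)) ^ (-(1/2) : ℝ)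

lemma RF'_zero (p q : ℝ) :
    RF' p q 0 = (1/2) * ∫ t in Ioi (0:ℝ), ((t+p)*(t+q)*t) ^ (-(1/2) : ℝ) := by
  simp [RF']

lemma integrand_eq (p q t : ℝ) (hp : 0 < p) (hq : 0 < q) (ht : 0 < t) :
    ((t+p)*(t+q)*t) ^ (-(1/2) : ℝ)
      = (Real.sqrt (t+p) * Real.sqrt (t+q) * Real.sqrt t)⁻¹ := by
  have h1 : (0:ℝ) < (t+p)*(t+q)*t := by positivity
  rw [Real.rpow_neg h1.le, ← Real.sqrt_eq_rpow,
    Real.sqrt_mul (by positivity : (0:ℝ) ≤ (t+p)*(t+q)),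
    Real.sqrt_mul (by positivity : (0:ℝ) ≤ t+p)]

lemma le_integrand (p q t : ℝ) (hq : 0 < q) (hqp : q ≤ p) (ht : 0 < t) :
    (Real.sqrt t * (t + p))⁻¹ ≤ ((t+p)*(t+q)*t) ^ (-(1/2) : ℝ) := by
  have hp : 0 < p := lt_of_lt_of_le hq hqp
  rw [integrand_eq p q t hp hq ht]
  apply inv_anti₀
  · positivity
  · have h1 : Real.sqrt (t+q) ≤ Real.sqrt (t+p) := Real.sqrt_le_sqrt (by linarith)
    have h2 : Real.sqrt (t+p) * Real.sqrt (t+p) = t + p :=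
      Real.mul_self_sqrt (by linarith)
    calc Real.sqrt (t+p) * Real.sqrt (t+q) * Real.sqrt t
        ≤ Real.sqrt (t+p) * Real.sqrt (t+p) * Real.sqrt t := by
          apply mul_le_mul_of_nonneg_right (mul_le_mul_of_nonneg_left h1 (Real.sqrt_nonneg _))
            (Real.sqrt_nonneg _)
      _ = Real.sqrt t * (t + p) := by rw [h2]; ring

lemma integrand_le (p q t : ℝ) (hq : 0 < q) (hqp : q ≤ p) (ht : 0 < t) :
    ((t+p)*(t+q)*t) ^ (-(1/2) : ℝ) ≤ (Real.sqrt t * (t + q))⁻¹ := by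
  have hp : 0 < p := lt_of_lt_of_le hq hqp
  rw [integrand_eq p q t hp hq ht]
  apply inv_anti₀
  · positivity
  · have h1 : Real.sqrt (t+q) ≤ Real.sqrt (t+p) := Real.sqrt_le_sqrt (by linarith)
    have h2 : Real.sqrt (t+q) * Real.sqrt (t+q) = t + q :=
      Real.mul_self_sqrt (by linarith)
    calc Real.sqrt t * (t + q) = Real.sqrt (t+q) * Real.sqrt (t+q) * Real.sqrt t := by
          rw [h2]; ring
      _ ≤ Real.sqrt (t+p) * Real.sqrt (t+q) * Real.sqrt t := by
          apply mul_le_mul_of_nonneg_right (mul_le_mul_of_nonneg_right h1 (Real.sqrt_nonneg _))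
            (Real.sqrt_nonneg _)

lemma le_integrand_strict (p q t : ℝ) (hq : 0 < q) (hqp : q < p) (ht : 0 < t) :
    (Real.sqrt t * (t + p))⁻¹ < ((t+p)*(t+q)*t) ^ (-(1/2) : ℝ) := by
  have hp : 0 < p := lt_trans hq hqp
  rw [integrand_eq p q t hp hq ht]
  apply inv_strictAnti₀
  · positivity
  · have h1 : Real.sqrt (t+q) < Real.sqrt (t+p) := by
      apply Real.sqrt_lt_sqrt (by linarith) (by linarith)
    have h2 : Real.sqrt (t+p) * Real.sqrt (t+p) = t + p :=
      Real.mul_self_sqrt (by linarith)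
    calc Real.sqrt (t+p) * Real.sqrt (t+q) * Real.sqrt t
        < Real.sqrt (t+p) * Real.sqrt (t+p) * Real.sqrt t := by
          apply mul_lt_mul_of_pos_right (mul_lt_mul_of_pos_left h1 (Real.sqrt_pos.2 (by linarith)))
            (Real.sqrt_pos.2 ht)
      _ = Real.sqrt t * (t + p) := by rw [h2]; ring

lemma integrand_lt_strict (p q t : ℝ) (hq : 0 < q) (hqp : q < p) (ht : 0 < t) :
    ((t+p)*(t+q)*t) ^ (-(1/2) : ℝ) < (Real.sqrt t * (t + q))⁻¹ := by
  have hp : 0 < p := lt_trans hq hqp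
  rw [integrand_eq p q t hp hq ht]
  apply inv_strictAnti₀
  · positivity
  · have h1 : Real.sqrt (t+q) < Real.sqrt (t+p) := by
      apply Real.sqrt_lt_sqrt (by linarith) (by linarith)
    have h2 : Real.sqrt (t+q) * Real.sqrt (t+q) = t + q :=
      Real.mul_self_sqrt (by linarith)
    calc Real.sqrt t * (t + q) = Real.sqrt (t+q) * Real.sqrt (t+q) * Real.sqrt t := by
          rw [h2]; ring
      _ < Real.sqrt (t+p) * Real.sqrt (t+q) * Real.sqrt t := by
          apply mul_lt_mul_of_pos_right (mul_lt_mul_of_pos_right h1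
            (Real.sqrt_pos.2 (by linarith))) (Real.sqrt_pos.2 ht)

lemma RF'_integrableOn (p q : ℝ) (hq : 0 < q) (hqp : q ≤ p) :
    IntegrableOn (fun t : ℝ => ((t+p)*(t+q)*t) ^ (-(1/2) : ℝ)) (Ioi 0) := by
  apply Integrable.mono' (sqrtInt_integrable q hq)
  · exact (by measurability : Measurable
      (fun t : ℝ => ((t+p)*(t+q)*t) ^ (-(1/2) : ℝ))).aestronglyMeasurable
  · filter_upwards [ae_restrict_mem measurableSet_Ioi] with t ht
    have ht0 : (0:ℝ) < t := ht
    have hp : 0 < p := lt_of_lt_of_le hq hqp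
    rw [Real.norm_eq_abs, abs_of_nonneg (Real.rpow_nonneg
      (by positivity : (0:ℝ) ≤ (t+p)*(t+q)*t) _)]
    exact integrand_le p q t hq hqp ht

lemma strict_int {f g : ℝ → ℝ} (hf : IntegrableOn f (Ioi (0:ℝ)))
    (hg : IntegrableOn g (Ioi (0:ℝ))) (hlt : ∀ t ∈ Ioi (0:ℝ), f t < g t) :
    ∫ t in Ioi (0:ℝ), f t < ∫ t in Ioi (0:ℝ), g t := by
  have hle : ∫ t in Ioi (0:ℝ), f t ≤ ∫ t in Ioi (0:ℝ), g t :=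
    setIntegral_mono_on hf hg measurableSet_Ioi (fun t ht => (hlt t ht).le)
  rcases hle.lt_or_eq with h | h
  · exact h
  exfalso
  have h0 : ∫ t in Ioi (0:ℝ), (g t - f t) = 0 := by
    rw [integral_sub hg hf]; linarith
  have hnn : 0 ≤ᵐ[volume.restrict (Ioi (0:ℝ))] fun t => g t - f t := by
    filter_upwards [ae_restrict_mem measurableSet_Ioi] with t ht
    exact sub_nonneg.2 (hlt t ht).le
  have hzero := (integral_eq_zero_iff_of_nonneg_ae hnn (hg.sub hf)).1 h0
  have hne : volume.restrict (Ioi (0:ℝ)) ≠ 0 := by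
    rw [Ne, Measure.restrict_eq_zero]
    simp [Real.volume_Ioi]
  haveI : (ae (volume.restrict (Ioi (0:ℝ)))).NeBot := ae_neBot.2 hne
  have hz : ∀ᵐ t ∂(volume.restrict (Ioi (0:ℝ))), g t - f t = 0 := hzero
  obtain ⟨t, ht1, ht2⟩ := (hz.and (ae_restrict_mem measurableSet_Ioi)).exists
  have := hlt t ht2
  linarith

lemma RF'_lower (p q : ℝ) (hq : 0 < q) (hqp : q ≤ p) :
    π / (2 * Real.sqrt p) ≤ RF' p q 0 := by
  have hp : 0 < p := lt_of_lt_of_le hq hqp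
  rw [RF'_zero]
  have h := setIntegral_mono_on (sqrtInt_integrable p hp) (RF'_integrableOn p q hq hqp)
    measurableSet_Ioi (fun t ht => le_integrand p q t hq hqp ht)
  rw [sqrtInt_value p hp] at h
  have heq : π / (2 * Real.sqrt p) = 1/2 * (π / Real.sqrt p) := by ring
  rw [heq]
  linarith

lemma RF'_upper (p q : ℝ) (hq : 0 < q) (hqp : q ≤ p) :
    RF' p q 0 ≤ π / (2 * Real.sqrt q) := by
  rw [RF'_zero]
  have h := setIntegral_mono_on (RF'_integrableOn p q hq hqp) (sqrtInt_integrable q hq)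
    measurableSet_Ioi (fun t ht => integrand_le p q t hq hqp ht)
  rw [sqrtInt_value q hq] at h
  have heq : π / (2 * Real.sqrt q) = 1/2 * (π / Real.sqrt q) := by ring
  rw [heq]
  linarith

lemma RF'_lower_strict (p q : ℝ) (hq : 0 < q) (hqp : q < p) :
    π / (2 * Real.sqrt p) < RF' p q 0 := by
  have hp : 0 < p := lt_trans hq hqp
  rw [RF'_zero]
  have h := strict_int (sqrtInt_integrable p hp) (RF'_integrableOn p q hq hqp.le)
    (fun t ht => le_integrand_strict p q t hq hqp ht)
  rw [sqrtInt_value p hp] at h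
  have heq : π / (2 * Real.sqrt p) = 1/2 * (π / Real.sqrt p) := by ring
  rw [heq]
  linarith

lemma RF'_upper_strict (p q : ℝ) (hq : 0 < q) (hqp : q < p) :
    RF' p q 0 < π / (2 * Real.sqrt q) := by
  rw [RF'_zero]
  have h := strict_int (RF'_integrableOn p q hq hqp.le) (sqrtInt_integrable q hq)
    (fun t ht => integrand_lt_strict p q t hq hqp ht)
  rw [sqrtInt_value q hq] at h
  have heq : π / (2 * Real.sqrt q) = 1/2 * (π / Real.sqrt q) := by ring
  rw [heq]
  linarith

lemma RF'_diag (p : ℝ) (hp : 0 < p) : RF' p p 0 = π / (2 * Real.sqrt p) :=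
  le_antisymm (RF'_upper p p hp le_rfl) (RF'_lower p p hp le_rfl)

lemma landen_pointwise (A G t F R : ℝ) (ht : 0 < t) (hF : 0 < F)
    (hFA : 0 < F + A) (hR : 0 < R) (key2 : F * (F + G) = t * (F + A)) :
    ((F + A)/R) * ((F+A)*(F+G)*F) ^ (-(1/2):ℝ) = (R * Real.sqrt t)⁻¹ := by
  have hprod : (F+A)*(F+G)*F = (F+A)^2*t := by linear_combination (F+A)*key2
  rw [hprod, Real.rpow_neg (by positivity), ← Real.sqrt_eq_rpow,
    Real.sqrt_mul (by positivity), Real.sqrt_sq hFA.le]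
  have hst : 0 < Real.sqrt t := Real.sqrt_pos.2 ht
  field_simp

noncomputable def lf (x y t : ℝ) : ℝ :=
  (t + Real.sqrt ((t+x)*(t+y)) - Real.sqrt (x*y))/2

noncomputable def lf' (x y t : ℝ) : ℝ :=
  (1 + (2*t+x+y)/(2*Real.sqrt ((t+x)*(t+y))))/2

lemma landen (x y : ℝ) (hx : 0 < x) (hy : 0 < y) :
    RF' x y 0 = RF' (((Real.sqrt x + Real.sqrt y)/2)^2) (Real.sqrt (x*y)) 0 := by
  have hG : 0 < Real.sqrt (x*y) := Real.sqrt_pos.2 (mul_pos hx hy)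
  have hG2 : Real.sqrt (x*y)^2 = x*y := Real.sq_sqrt (mul_pos hx hy).le
  have hxy : Real.sqrt x * Real.sqrt y = Real.sqrt (x*y) := (Real.sqrt_mul hx.le y).symm
  have hA : ((Real.sqrt x + Real.sqrt y)/2)^2 = (x + y + 2*Real.sqrt (x*y))/4 := by
    rw [← hxy, div_pow, add_sq, Real.sq_sqrt hx.le, Real.sq_sqrt hy.le]
    ring
  have hApos : 0 < ((Real.sqrt x + Real.sqrt y)/2)^2 := by rw [hA]; linarith
  have hRpos : ∀ t : ℝ, 0 ≤ t → 0 < Real.sqrt ((t+x)*(t+y)) := fun t ht =>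
    Real.sqrt_pos.2 (mul_pos (by linarith) (by linarith))
  have hRG : ∀ t : ℝ, 0 ≤ t → Real.sqrt (x*y) ≤ Real.sqrt ((t+x)*(t+y)) := fun t ht =>
    Real.sqrt_le_sqrt (by nlinarith)
  have hfpos : ∀ t : ℝ, 0 < t → 0 < lf x y t := fun t ht => by
    have := hRG t ht.le
    rw [lf]
    linarith
  -- derivative
  have hderiv : ∀ t ∈ Ioi (0:ℝ), HasDerivAt (lf x y) (lf' x y t) t := by
    intro t ht
    have ht0 : (0:ℝ) < t := ht
    have hP : HasDerivAt (fun s : ℝ => (s+x)*(s+y)) (2*t+x+y) t := by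
      have : HasDerivAt (fun s : ℝ => (s+x)*(s+y)) ((1:ℝ)*(t+y) + (t+x)*1) t :=
        ((hasDerivAt_id t).add_const x).mul ((hasDerivAt_id t).add_const y)
      convert this using 1
      ring
    have hPt : (t+x)*(t+y) ≠ 0 := by positivity
    have hsq : HasDerivAt (fun s : ℝ => Real.sqrt ((s+x)*(s+y)))
        (1 / (2 * Real.sqrt ((t+x)*(t+y))) * (2*t+x+y)) t :=
      (Real.hasDerivAt_sqrt hPt).comp t hP
    have h2 : HasDerivAt (fun s : ℝ => (id s + Real.sqrt ((s+x)*(s+y)) - Real.sqrt (x*y))/2)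
        ((1 + 1 / (2 * Real.sqrt ((t+x)*(t+y))) * (2*t+x+y)) / 2) t :=
      (((hasDerivAt_id t).add hsq).sub_const (Real.sqrt (x*y))).div_const 2
    have heq : (fun s : ℝ => (id s + Real.sqrt ((s+x)*(s+y)) - Real.sqrt (x*y))/2) = lf x y := by
      funext s
      rw [lf, id_eq]
    rw [← heq]
    convert h2 using 1
    rw [lf']
    ring
  have hderivW : ∀ t ∈ Ioi (0:ℝ), HasDerivWithinAt (lf x y) (lf' x y t) (Ioi 0) t :=
    fun t ht => (hderiv t ht).hasDerivWithinAt
  -- strict monotonicity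
  have hmono : StrictMonoOn (lf x y) (Ici (0:ℝ)) := by
    intro s hs t ht hst
    rw [lf, lf]
    have hs0 : (0:ℝ) ≤ s := hs
    have h1 : Real.sqrt ((s+x)*(s+y)) ≤ Real.sqrt ((t+x)*(t+y)) :=
      Real.sqrt_le_sqrt (by nlinarith)
    linarith
  have hinj : InjOn (lf x y) (Ioi (0:ℝ)) := (hmono.injOn).mono Ioi_subset_Ici_self
  -- continuity
  have hcont : Continuous (lf x y) := by
    unfold lf
    apply Continuous.div_const
    apply Continuous.sub _ continuous_const
    exact continuous_id.add (Real.continuous_sqrt.comp (by continuity))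
  have hf0 : lf x y 0 = 0 := by rw [lf]; simp
  -- image
  have himg : lf x y '' (Ioi 0) = Ioi 0 := by
    apply Subset.antisymm
    · rintro s ⟨t, ht, rfl⟩
      exact hfpos t ht
    · intro s hs
      have hs0 : (0:ℝ) < s := hs
      have hf2s : s ≤ lf x y (2*s) := by
        have := hRG (2*s) (by linarith)
        rw [lf]
        linarith
      have hIcc : s ∈ Icc (lf x y 0) (lf x y (2*s)) := by
        rw [hf0]; exact ⟨hs0.le, hf2s⟩
      obtain ⟨t, htmem, htval⟩ := intermediate_value_Icc (by linarith : (0:ℝ) ≤ 2*s)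
        hcont.continuousOn hIcc
      refine ⟨t, ?_, htval⟩
      rcases htmem.1.eq_or_lt with rfl | h
      · exfalso; rw [hf0] at htval; linarith
      · exact h
  -- change of variables
  rw [RF'_zero, RF'_zero]
  have hcov := integral_image_eq_integral_abs_deriv_smul measurableSet_Ioi hderivW hinj
    (fun s : ℝ => ((s+((Real.sqrt x + Real.sqrt y)/2)^2)*(s+Real.sqrt (x*y))*s) ^ (-(1/2) : ℝ))
  rw [himg] at hcov
  rw [hcov]
  congr 1
  apply setIntegral_congr_fun measurableSet_Ioi
  intro t ht
  have ht0 : (0:ℝ) < t := ht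
  have hR : 0 < Real.sqrt ((t+x)*(t+y)) := hRpos t ht0.le
  have hR2 : Real.sqrt ((t+x)*(t+y))^2 = (t+x)*(t+y) := Real.sq_sqrt (by positivity)
  have hft : 0 < lf x y t := hfpos t ht0
  have hftA : 0 < lf x y t + ((Real.sqrt x + Real.sqrt y)/2)^2 := by linarith
  have hftG : 0 < lf x y t + Real.sqrt (x*y) := by linarith
  have hfteq : lf x y t = (t + Real.sqrt ((t+x)*(t+y)) - Real.sqrt (x*y))/2 := by rw [lf]
  have key1 : lf x y t + ((Real.sqrt x + Real.sqrt y)/2)^2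
      = (2*t + x + y + 2*Real.sqrt ((t+x)*(t+y)))/4 := by
    rw [hfteq, hA]; ring
  have key2 : lf x y t * (lf x y t + Real.sqrt (x*y))
      = t * (lf x y t + ((Real.sqrt x + Real.sqrt y)/2)^2) := by
    rw [hfteq, hA]
    linear_combination hR2/4 - hG2/4
  have key3 : lf' x y t = (lf x y t + ((Real.sqrt x + Real.sqrt y)/2)^2)
      / Real.sqrt ((t+x)*(t+y)) := by
    rw [lf', key1]
    field_simp
    ring
  have hfI : ((t+x)*(t+y)*t) ^ (-(1/2) : ℝ)
      = (Real.sqrt ((t+x)*(t+y)) * Real.sqrt t)⁻¹ := by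
    rw [integrand_eq x y t hx hy ht0, Real.sqrt_mul (by linarith : (0:ℝ) ≤ t+x)]
  simp only [smul_eq_mul]
  rw [hfI, key3, abs_of_pos (by positivity)]
  exact (landen_pointwise _ _ t _ _ ht0 hft hftA hR key2).symm

lemma quarter (z : ℝ) (hz : 0 < z) :
    (z⁻¹) ^ ((1:ℝ)/4) = (Real.sqrt (Real.sqrt z))⁻¹ := by
  rw [Real.sqrt_eq_rpow, Real.sqrt_eq_rpow, ← Real.rpow_mul hz.le,
    Real.inv_rpow hz.le]
  norm_num

/-- (F2b): algebraic bounds for the complete integral `R_F(x,y,0)`,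
with equalities throughout iff `x = y`. -/
theorem RF_complete_bounds (x y : ℝ) (hx : 0 < x) (hy : 0 < y) :
    (1 / Real.sqrt ((x + y) / 2) ≤
        Real.sqrt (2 / ((x + y) / 2 + Real.sqrt (x * y))) ∧
      Real.sqrt (2 / ((x + y) / 2 + Real.sqrt (x * y))) ≤
        2 / (Real.sqrt (((x + y) / 2 + Real.sqrt (x * y)) / 2) + Real.sqrt (Real.sqrt (x * y))) ∧
      2 / (Real.sqrt (((x + y) / 2 + Real.sqrt (x * y)) / 2) + Real.sqrt (Real.sqrt (x * y))) ≤
        (2 / π) * RF x y 0 ∧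
      (2 / π) * RF x y 0 ≤
        (2 / ((x + y) / 2 * Real.sqrt (x * y) + Real.sqrt (x * y) ^ 2)) ^ ((1:ℝ)/4) ∧
      (2 / ((x + y) / 2 * Real.sqrt (x * y) + Real.sqrt (x * y) ^ 2)) ^ ((1:ℝ)/4) ≤
        1 / Real.sqrt (Real.sqrt (x * y))) ∧
    ((1 / Real.sqrt ((x + y) / 2) =
        Real.sqrt (2 / ((x + y) / 2 + Real.sqrt (x * y))) ↔ x = y) ∧
      (Real.sqrt (2 / ((x + y) / 2 + Real.sqrt (x * y))) =
        2 / (Real.sqrt (((x + y) / 2 + Real.sqrt (x * y)) / 2) + Real.sqrt (Real.sqrt (x * y))) ↔ x = y) ∧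
      (2 / (Real.sqrt (((x + y) / 2 + Real.sqrt (x * y)) / 2) + Real.sqrt (Real.sqrt (x * y))) =
        (2 / π) * RF x y 0 ↔ x = y) ∧
      ((2 / π) * RF x y 0 =
        (2 / ((x + y) / 2 * Real.sqrt (x * y) + Real.sqrt (x * y) ^ 2)) ^ ((1:ℝ)/4) ↔ x = y) ∧
      ((2 / ((x + y) / 2 * Real.sqrt (x * y) + Real.sqrt (x * y) ^ 2)) ^ ((1:ℝ)/4) =
        1 / Real.sqrt (Real.sqrt (x * y)) ↔ x = y)) := by
  
  have hπ : 0 < π := Real.pi_pos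
  by_cases hxy : x = y
  · subst hxy
    have hsx : 0 < Real.sqrt x := Real.sqrt_pos.2 hx
    have hgx : Real.sqrt (x*x) = x := Real.sqrt_mul_self hx.le
    have ha : (x+x)/2 = x := by ring
    have e2 : Real.sqrt (2/((x+x)/2 + Real.sqrt (x*x))) = 1/Real.sqrt x := by
      rw [ha, hgx, show 2/(x+x) = x⁻¹ by field_simp; ring, Real.sqrt_inv, one_div]
    have e3 : 2/(Real.sqrt (((x+x)/2 + Real.sqrt (x*x))/2) + Real.sqrt (Real.sqrt (x*x)))
        = 1/Real.sqrt x := by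
      rw [ha, hgx, ha]
      rw [show Real.sqrt x + Real.sqrt x = 2*Real.sqrt x by ring]
      field_simp
    have e4 : (2/π) * RF x x 0 = 1/Real.sqrt x := by
      have h1 : RF x x 0 = RF' x x 0 := rfl
      rw [h1, RF'_diag x hx]
      field_simp
    have e5 : (2/((x+x)/2 * Real.sqrt (x*x) + Real.sqrt (x*x)^2))^((1:ℝ)/4)
        = 1/Real.sqrt x := by
      rw [ha, hgx, show 2/(x*x + x^2) = (x^2)⁻¹ by field_simp; ring,
        quarter _ (by positivity), Real.sqrt_sq hx.le, one_div]
    have e6 : (1:ℝ)/Real.sqrt (Real.sqrt (x*x)) = 1/Real.sqrt x := by rw [hgx]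
    rw [e2, e3, e4, e5, e6, ha]
    simp
  · -- strict case
    have hsx : 0 < Real.sqrt x := Real.sqrt_pos.2 hx
    have hsy : 0 < Real.sqrt y := Real.sqrt_pos.2 hy
    have hx2 : Real.sqrt x ^ 2 = x := Real.sq_sqrt hx.le
    have hy2 : Real.sqrt y ^ 2 = y := Real.sq_sqrt hy.le
    have hsxy : Real.sqrt x ≠ Real.sqrt y := fun h => hxy (by rw [← hx2, ← hy2, h])
    have hsq : 0 < (Real.sqrt x - Real.sqrt y)^2 := by
      have h0 : Real.sqrt x - Real.sqrt y ≠ 0 := sub_ne_zero.2 hsxy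
      positivity
    set g : ℝ := Real.sqrt (x*y) with hgdef
    have hgeq : g = Real.sqrt x * Real.sqrt y := Real.sqrt_mul hx.le y
    have hg : 0 < g := Real.sqrt_pos.2 (mul_pos hx hy)
    set a : ℝ := (x+y)/2 with hadef
    have hga : g < a := by rw [hgeq, hadef]; nlinarith [hsq, hx2, hy2]
    have hapos : 0 < a := lt_trans hg hga
    set a1 : ℝ := (a+g)/2 with ha1def
    have hga1 : g < a1 := by rw [ha1def]; linarith
    have ha1a : a1 < a := by rw [ha1def]; linarith
    have ha1pos : 0 < a1 := lt_trans hg hga1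
    have hA1 : ((Real.sqrt x + Real.sqrt y)/2)^2 = a1 := by
      rw [ha1def, hadef, hgeq]; linear_combination hx2/4 + hy2/4
    have hsa1 : 0 < Real.sqrt a1 := Real.sqrt_pos.2 ha1pos
    have hsg : 0 < Real.sqrt g := Real.sqrt_pos.2 hg
    have hsgsa1 : Real.sqrt g < Real.sqrt a1 := Real.sqrt_lt_sqrt hg.le hga1
    set A2 : ℝ := ((Real.sqrt a1 + Real.sqrt g)/2)^2 with hA2def
    set g1 : ℝ := Real.sqrt (a1*g) with hg1def
    have hg1eq : g1 = Real.sqrt a1 * Real.sqrt g := Real.sqrt_mul ha1pos.le g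
    have hg1pos : 0 < g1 := by rw [hg1eq]; positivity
    have hA2pos : 0 < A2 := by rw [hA2def]; positivity
    have hsq2 : 0 < (Real.sqrt a1 - Real.sqrt g)^2 := by
      have h0 : Real.sqrt a1 - Real.sqrt g ≠ 0 := sub_ne_zero.2 (ne_of_gt hsgsa1)
      positivity
    have hg1A2 : g1 < A2 := by rw [hg1eq, hA2def]; nlinarith [hsq2]
    have hgg1 : g < g1 := by
      calc g = Real.sqrt g * Real.sqrt g := (Real.mul_self_sqrt hg.le).symm
        _ < Real.sqrt a1 * Real.sqrt g := mul_lt_mul_of_pos_right hsgsa1 hsg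
        _ = g1 := hg1eq.symm
    have hRF : RF x y 0 = RF' A2 g1 0 := by
      have h1 : RF x y 0 = RF' x y 0 := rfl
      rw [h1, landen x y hx hy, ← hgdef, hA1, landen a1 g ha1pos hg, ← hg1def, ← hA2def]
    have hlow := RF'_lower_strict A2 g1 hg1pos hg1A2
    have hupp := RF'_upper_strict A2 g1 hg1pos hg1A2
    have hsqA2 : Real.sqrt A2 = (Real.sqrt a1 + Real.sqrt g)/2 := by
      rw [hA2def, Real.sqrt_sq (by positivity)]
    have e2 : Real.sqrt (2/(a+g)) = 1/Real.sqrt a1 := by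
      rw [show 2/(a+g) = a1⁻¹ by rw [ha1def]; field_simp, Real.sqrt_inv, one_div]
    have e5 : (2/(a*g + g^2))^((1:ℝ)/4) = 1/Real.sqrt g1 := by
      have hb : 2/(a*g+g^2) = (a1*g)⁻¹ := by rw [ha1def]; field_simp
      rw [hb, quarter _ (by positivity), ← hg1def, one_div]
    have S1 : 1/Real.sqrt a < Real.sqrt (2/(a+g)) := by
      rw [e2]
      exact one_div_lt_one_div_of_lt hsa1 (Real.sqrt_lt_sqrt ha1pos.le ha1a)
    have S2 : Real.sqrt (2/(a+g)) < 2/(Real.sqrt a1 + Real.sqrt g) := by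
      rw [e2, show (2:ℝ)/(Real.sqrt a1 + Real.sqrt g)
        = 1/((Real.sqrt a1 + Real.sqrt g)/2) by rw [one_div_div]]
      exact one_div_lt_one_div_of_lt (by positivity) (by linarith)
    have S3 : 2/(Real.sqrt a1 + Real.sqrt g) < (2/π) * RF x y 0 := by
      rw [hRF]
      rw [show 2/(Real.sqrt a1 + Real.sqrt g) = (2/π) * (π/(2*Real.sqrt A2)) by
        rw [hsqA2]; field_simp]
      exact mul_lt_mul_of_pos_left hlow (by positivity)
    have S4 : (2/π) * RF x y 0 < (2/(a*g + g^2))^((1:ℝ)/4) := by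
      rw [hRF, e5]
      rw [show 1/Real.sqrt g1 = (2/π) * (π/(2*Real.sqrt g1)) by
        field_simp]
      exact mul_lt_mul_of_pos_left hupp (by positivity)
    have S5 : (2/(a*g + g^2))^((1:ℝ)/4) < 1/Real.sqrt g := by
      rw [e5]
      exact one_div_lt_one_div_of_lt (Real.sqrt_pos.2 hg) (Real.sqrt_lt_sqrt hg.le hgg1)
    exact ⟨⟨S1.le, S2.le, S3.le, S4.le, S5.le⟩,
      ⟨fun h => absurd h (ne_of_lt S1), fun h => absurd h hxy⟩,
      ⟨fun h => absurd h (ne_of_lt S2), fun h => absurd h hxy⟩,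
      ⟨fun h => absurd h (ne_of_lt S3), fun h => absurd h hxy⟩,
      ⟨fun h => absurd h (ne_of_lt S4), fun h => absurd h hxy⟩,
      ⟨fun h => absurd h (ne_of_lt S5), fun h => absurd h hxy⟩⟩
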